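/- The series Σ_{ℓ powerful} log(ℓ + 1)/ℓ, summed over all powerful natural numbers ℓ, converges. -/

import Mathlib

open Finset
open scoped Classical

/-- Number of distinct exponents in the prime factorization of `n`. -/
noncomputable def fexp (n : ℕ) : ℕ :=
  (n.primeFactors.image fun p => n.factorization p).card

/-- `n` is powerful if every prime dividing `n` divides it at least twice. -/
def Powerful (n : ℕ) : Prop :=
  0 < n ∧ ∀ p : ℕ, p.Prime → p ∣ n → p ^ 2 ∣ n

/-- Dedekind `ψ` function, as a real number. -/
noncomputable def dedekindPsi (n : ℕ) : ℝ :=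
  (n : ℝ) * ∏ p ∈ n.primeFactors, (1 + 1 / (p : ℝ))

noncomputable def rho : ℕ → ℕ → ℝ
  | 0, _ => 0
  | 1, n => if n = 1 then 1 else 0
  | (k + 2), n =>
      if n = 1 ∨ ¬ Squarefree n then 0
      else (1 / ((n : ℝ) - 1)) * ∑ d ∈ n.divisors.filter (· < n), rho (k + 1) d

/-- `g(n) = ω(n) - f(n)`. -/
noncomputable def gexp (n : ℕ) : ℕ := n.primeFactors.card - fexp n

/-- `n` is special if all exponents in its prime factorization are distinct. -/
noncomputable def Special (n : ℕ) : Prop := fexp n = n.primeFactors.card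

/-!
Writing `n = b² a` with `a` squarefree, powerfulness forces every prime of `a` to divide `b`,
so `a ∣ b` and `n = c² a³`. Hence the powerful numbers inject into pairs `(c, a)`, and
`∑ n^(-s)` over them is dominated by `(∑ c^(-2s)) (∑ a^(-3s))`, finite for `s > 1/2`.
Since `log (ℓ + 1) / ℓ = O(ℓ^(-3/4))`, the series converges.
-/

open Real

theorem Powerful.exists_eq_sq_mul_cube {n : ℕ} (hn : Powerful n) :
    ∃ c a : ℕ, n = c ^ 2 * a ^ 3 := by
  obtain ⟨a, b, hab, ha⟩ := Nat.sq_mul_squarefree n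
  have hb : b ≠ 0 := by rintro rfl; exact hn.1.ne' (by simpa using hab.symm)
  have hdvd : a ∣ b := by
    rw [← Nat.prod_primeFactors_of_squarefree ha, Nat.prod_primeFactors_dvd_iff hb]
    intro p hp
    have hp' := Nat.prime_of_mem_primeFactors hp
    have hpn : p ^ (1 + 1) ∣ b ^ 2 * a :=
      hab ▸ hn.2 p hp' (hab ▸ (Nat.dvd_of_mem_primeFactors hp).mul_left _)
    have hpb : p ∣ b ^ 2 := by
      simpa using Squarefree.pow_dvd_of_squarefree_of_pow_succ_dvd_mul_left ha hp'.prime hpn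
    exact Nat.mem_primeFactors.mpr ⟨hp', hp'.dvd_of_dvd_pow hpb, hb⟩
  obtain ⟨c, rfl⟩ := hdvd
  exact ⟨c, a, by rw [← hab]; ring⟩

theorem summable_powerful_rpow_neg {s : ℝ} (hs : 1 / 2 < s) :
    Summable fun n : {n : ℕ // Powerful n} => ((n : ℕ) : ℝ) ^ (-s) := by
  choose c a hca using fun n : {n : ℕ // Powerful n} => n.2.exists_eq_sq_mul_cube
  have hinj : Function.Injective fun n => (c n, a n) := by
    intro m n h
    simp only [Prod.mk.injEq] at h
    exact Subtype.ext (by rw [hca m, hca n, h.1, h.2])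
  have hpairs : Summable fun z : ℕ × ℕ => (z.1 : ℝ) ^ (-2 * s) * (z.2 : ℝ) ^ (-3 * s) :=
    (summable_nat_rpow.mpr (by linarith)).mul_of_nonneg (summable_nat_rpow.mpr (by linarith))
      (fun _ => by positivity) (fun _ => by positivity)
  refine (hpairs.comp_injective hinj).congr fun n => ?_
  simp only [Function.comp_apply, hca n]
  push_cast
  rw [mul_rpow (by positivity) (by positivity), ← rpow_natCast, ← rpow_natCast,
    ← rpow_mul (by positivity), ← rpow_mul (by positivity)]
  norm_num [mul_comm]

theorem Real.log_add_one_div_le {x : ℝ} (hx : 1 ≤ x) :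
    log (x + 1) / x ≤ 4 * 2 ^ (1 / 4 : ℝ) * x ^ (-(3 / 4) : ℝ) := by
  have hx0 : 0 < x := by linarith
  have hlog : log (x + 1) ≤ (2 * x) ^ (1 / 4 : ℝ) / (1 / 4) :=
    calc log (x + 1) ≤ (x + 1) ^ (1 / 4 : ℝ) / (1 / 4) :=
          log_le_rpow_div (by positivity) (by norm_num)
      _ ≤ (2 * x) ^ (1 / 4 : ℝ) / (1 / 4) := by gcongr; linarith
  calc log (x + 1) / x ≤ (2 * x) ^ (1 / 4 : ℝ) / (1 / 4) / x := by gcongr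
    _ = 4 * 2 ^ (1 / 4 : ℝ) * x ^ (-(3 / 4) : ℝ) := by
        rw [mul_rpow (by norm_num) hx0.le, show (-(3 / 4) : ℝ) = 1 / 4 - 1 by norm_num,
          rpow_sub_one hx0.ne']
        ring

theorem stmt_16 :
    Summable (fun ℓ : ℕ => if Powerful ℓ then Real.log ((ℓ : ℝ) + 1) / (ℓ : ℝ) else 0) := by
  have hsub : Summable fun n : {n : ℕ // Powerful n} => log ((n : ℕ) + 1) / (n : ℕ) :=
    ((summable_powerful_rpow_neg (s := 3 / 4) (by norm_num)).mul_left
      (4 * 2 ^ (1 / 4 : ℝ))).of_nonneg_of_le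
      (fun n => div_nonneg (log_nonneg (by simp)) n.1.cast_nonneg)
      (fun n => log_add_one_div_le (by exact_mod_cast n.2.1))
  convert summable_subtype_iff_indicator (s := {n | Powerful n})
    (f := fun ℓ : ℕ => log ((ℓ : ℝ) + 1) / (ℓ : ℝ)) |>.mp hsub using 2 with ℓ
  simp only [Set.indicator_apply, Set.mem_ofPred_eq]
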